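/- arXiv:1705.06427 — 3 statements merged into one kernel-verified Lean document; each statement's English description precedes it below -/
import Mathlib

section
/- Let B be a p×p Hermitian matrix, z = u + iv with v > 0, r ∈ C^p, and M any p×p matrix. Then |tr((B − zI)^{-1} M) − tr((B + rr' − zI)^{-1} M)| ≤ ||M||/v. -/
/-!
Write `A = B - z • 1` and `q = A⁻¹ r`. By the Sherman–Morrison formula the difference of the
two traces is `(r* A⁻¹ M A⁻¹ r) / (1 + r* q)`. Since `A` is normal, `‖(A*)⁻¹ r‖ = ‖q‖`, so the
numerator is at most `‖M‖ ‖q‖²`. Since `r = A q` and `q* B q` is real, the denominator has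
imaginary part `Im (q* A* q) = v ‖q‖²`, which bounds its modulus from below.
-/

open Matrix WithLp

namespace Matrix

variable {n : Type*} [Fintype n]

theorem star_dotProduct_self_eq_norm_sq {𝕜 : Type*} [RCLike 𝕜] (x : n → 𝕜) :
    star x ⬝ᵥ x = (‖toLp 2 x‖ : 𝕜) ^ 2 := by
  rw [dotProduct_comm, ← EuclideanSpace.inner_toLp_toLp, inner_self_eq_norm_sq_to_K]

variable [DecidableEq n]

section ShermanMorrison

variable {K : Type*} [Field K] {A : Matrix n n K}

theorem det_add_vecMulVec (hA : IsUnit A.det) (u v : n → K) :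
    (A + vecMulVec u v).det = A.det * (1 + v ⬝ᵥ A⁻¹ *ᵥ u) := by
  rw [vecMulVec_eq Unit, det_add_replicateCol_mul_replicateRow hA, det_unique (1 + _),
    add_apply, one_apply_eq, Matrix.mul_assoc, ← replicateCol_mulVec,
    replicateRow_mul_replicateCol_apply]

theorem inv_add_vecMulVec (hA : IsUnit A.det) (u v : n → K) (hd : 1 + v ⬝ᵥ A⁻¹ *ᵥ u ≠ 0) :
    (A + vecMulVec u v)⁻¹
      = A⁻¹ - (1 + v ⬝ᵥ A⁻¹ *ᵥ u)⁻¹ • vecMulVec (A⁻¹ *ᵥ u) (v ᵥ* A⁻¹) := by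
  refine inv_eq_right_inv ?_
  have hR : (A + vecMulVec u v) * vecMulVec (A⁻¹ *ᵥ u) (v ᵥ* A⁻¹)
      = (1 + v ⬝ᵥ A⁻¹ *ᵥ u) • vecMulVec u (v ᵥ* A⁻¹) := by
    rw [add_mul, mul_vecMulVec, mulVec_mulVec, mul_nonsing_inv _ hA, one_mulVec,
      vecMulVec_mul_vecMulVec, vecMulVec_smul, add_smul, one_smul]
  rw [mul_sub, Matrix.mul_smul, hR, smul_smul, inv_mul_cancel₀ hd, one_smul, add_mul,
    mul_nonsing_inv _ hA, vecMulVec_mul, add_sub_cancel_right]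

theorem trace_inv_mul_sub_trace_inv_add_vecMulVec_mul (hA : IsUnit A.det) (u v : n → K)
    (hd : 1 + v ⬝ᵥ A⁻¹ *ᵥ u ≠ 0) (M : Matrix n n K) :
    trace (A⁻¹ * M) - trace ((A + vecMulVec u v)⁻¹ * M)
      = (1 + v ⬝ᵥ A⁻¹ *ᵥ u)⁻¹ * (v ᵥ* A⁻¹ ⬝ᵥ M *ᵥ (A⁻¹ *ᵥ u)) := by
  rw [inv_add_vecMulVec hA u v hd, Matrix.sub_mul, trace_sub, sub_sub_cancel, smul_mul,
    trace_smul, vecMulVec_mul, trace_vecMulVec, smul_eq_mul, dotProduct_comm (A⁻¹ *ᵥ u),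
    dotProduct_mulVec (v ᵥ* A⁻¹) M]

end ShermanMorrison

section Normal

variable {α : Type*} [CommRing α] [StarRing α]

instance isStarNormal_nonsing_inv (A : Matrix n n α) [IsStarNormal A] : IsStarNormal A⁻¹ where
  star_comm_self := by
    rw [star_eq_conjTranspose, conjTranspose_nonsing_inv, commute_iff_eq, ← Matrix.mul_inv_rev,
      ← Matrix.mul_inv_rev, ← star_eq_conjTranspose, star_comm_self' A]

theorem IsHermitian.isStarNormal_sub_smul_one {B : Matrix n n α} (hB : B.IsHermitian) (z : α) :
    IsStarNormal (B - z • 1) :=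
  have : IsStarNormal B := hB.isSelfAdjoint.isStarNormal
  Commute.isStarNormal_sub <| by
    rw [star_smul, star_one]
    exact (Commute.one_right B).smul_right _

end Normal

section Euclidean

variable {𝕜 : Type*} [RCLike 𝕜]

theorem norm_star_dotProduct_mulVec_le (M : Matrix n n 𝕜) (x y : n → 𝕜) :
    ‖star x ⬝ᵥ M *ᵥ y‖ ≤ ‖toLp 2 x‖ * ‖toEuclideanCLM (𝕜 := 𝕜) M‖ * ‖toLp 2 y‖ := by
  rw [dotProduct_comm, ← EuclideanSpace.inner_toLp_toLp, ← toEuclideanCLM_toLp, mul_assoc]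
  exact (norm_inner_le_norm _ _).trans (by gcongr; exact ContinuousLinearMap.le_opNorm _ _)

theorem norm_toLp_conjTranspose_mulVec (A : Matrix n n 𝕜) [IsStarNormal A] (x : n → 𝕜) :
    ‖toLp 2 (Aᴴ *ᵥ x)‖ = ‖toLp 2 (A *ᵥ x)‖ := by
  have := ContinuousLinearMap.isStarNormal_iff_norm_eq_adjoint.mp
    (IsStarNormal.map (toEuclideanCLM (n := n) (𝕜 := 𝕜)) A) (toLp 2 x)
  rw [← ContinuousLinearMap.star_eq_adjoint, ← map_star, toEuclideanCLM_toLp,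
    toEuclideanCLM_toLp] at this
  exact this.symm

end Euclidean

section Resolvent

variable {B : Matrix n n ℂ}

theorem IsHermitian.im_star_dotProduct_sub_smul_one_mulVec_self (hB : B.IsHermitian) (z : ℂ)
    (x : n → ℂ) : (star x ⬝ᵥ (B - z • 1) *ᵥ x).im = -z.im * ‖toLp 2 x‖ ^ 2 := by
  rw [sub_mulVec, dotProduct_sub, Complex.sub_im, ← RCLike.im_to_complex,
    hB.im_star_dotProduct_mulVec_self, smul_mulVec, one_mulVec, dotProduct_smul,
    star_dotProduct_self_eq_norm_sq, smul_eq_mul]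
  simp [← Complex.ofReal_pow]

theorem IsHermitian.isUnit_det_sub_smul_one (hB : B.IsHermitian) {z : ℂ} (hz : z.im ≠ 0) :
    IsUnit (B - z • 1).det := by
  rw [isUnit_iff_ne_zero]
  intro hdet
  obtain ⟨x, hx0, hx⟩ := exists_mulVec_eq_zero_iff.mpr hdet
  have := hB.im_star_dotProduct_sub_smul_one_mulVec_self z x
  rw [hx, dotProduct_zero, Complex.zero_im, zero_eq_mul, neg_eq_zero] at this
  simp_all

theorem IsHermitian.im_star_dotProduct_inv_sub_smul_one_mulVec (hB : B.IsHermitian) {z : ℂ}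
    (hz : z.im ≠ 0) (r : n → ℂ) :
    (star r ⬝ᵥ (B - z • 1)⁻¹ *ᵥ r).im = z.im * ‖toLp 2 ((B - z • 1)⁻¹ *ᵥ r)‖ ^ 2 := by
  set q := (B - z • 1)⁻¹ *ᵥ r
  have hr : r = (B - z • 1) *ᵥ q := by
    rw [mulVec_mulVec, mul_nonsing_inv _ (hB.isUnit_det_sub_smul_one hz), one_mulVec]
  conv_lhs => rw [hr, star_dotProduct, Complex.star_def, Complex.conj_im,
    hB.im_star_dotProduct_sub_smul_one_mulVec_self]
  ring

end Resolvent

end Matrix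

/-- Rank-one perturbation bound for resolvent traces
(Lemma 2.6 of Silverstein–Bai): for Hermitian `B`, `z` with `Im z = v > 0`,
`|tr((B−zI)⁻¹M) − tr((B+rr*−zI)⁻¹M)| ≤ ‖M‖/v`. -/
theorem stmt6 (p : ℕ) (B : Matrix (Fin p) (Fin p) ℂ) (hB : B.IsHermitian)
    (z : ℂ) (hz : 0 < z.im) (r : Fin p → ℂ) (M : Matrix (Fin p) (Fin p) ℂ) :
    ‖Matrix.trace ((B - z • (1 : Matrix (Fin p) (Fin p) ℂ))⁻¹ * M)
        - Matrix.trace ((B + vecMulVec r (star r) - z • (1 : Matrix (Fin p) (Fin p) ℂ))⁻¹ * M)‖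
      ≤ ‖Matrix.toEuclideanCLM (𝕜 := ℂ) M‖ / z.im := by
  set A := B - z • (1 : Matrix (Fin p) (Fin p) ℂ)
  set q := A⁻¹ *ᵥ r
  set d := 1 + star r ⬝ᵥ q
  set K := ‖toEuclideanCLM (𝕜 := ℂ) M‖
  have hA : IsUnit A.det := hB.isUnit_det_sub_smul_one hz.ne'
  have hd : d ≠ 0 := by
    have hR : (vecMulVec r (star r)).IsHermitian := by
      rw [IsHermitian, conjTranspose_vecMulVec, star_star]
    have hAr := (hB.add hR).isUnit_det_sub_smul_one hz.ne'
    rw [add_sub_right_comm, det_add_vecMulVec hA] at hAr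
    exact right_ne_zero_of_mul hAr.ne_zero
  have hdim : d.im = z.im * ‖toLp 2 q‖ ^ 2 := by
    rw [Complex.add_im, Complex.one_im, zero_add,
      hB.im_star_dotProduct_inv_sub_smul_one_mulVec hz.ne']
  have hT : ‖star r ᵥ* A⁻¹ ⬝ᵥ M *ᵥ q‖ ≤ K * ‖toLp 2 q‖ ^ 2 := by
    have : IsStarNormal A := hB.isStarNormal_sub_smul_one z
    have hx : star r ᵥ* A⁻¹ = star ((A⁻¹)ᴴ *ᵥ r) := by
      rw [star_mulVec, conjTranspose_conjTranspose]
    calc _ ≤ ‖toLp 2 ((A⁻¹)ᴴ *ᵥ r)‖ * K * ‖toLp 2 q‖ := hx ▸ norm_star_dotProduct_mulVec_le M _ q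
      _ = K * ‖toLp 2 q‖ ^ 2 := by rw [norm_toLp_conjTranspose_mulVec]; ring
  rw [add_sub_right_comm, trace_inv_mul_sub_trace_inv_add_vecMulVec_mul hA r (star r) hd M,
    norm_mul, norm_inv, inv_mul_le_iff₀ (norm_pos_iff.mpr hd), mul_div_assoc', le_div_iff₀ hz]
  calc _ ≤ K * ‖toLp 2 q‖ ^ 2 * z.im := by gcongr
    _ = K * d.im := by rw [hdim]; ring
    _ ≤ ‖d‖ * K := by rw [mul_comm]; gcongr; exact Complex.im_le_norm d
end

section
/- Let m̲(z) be the Stieltjes transform of the companion MP law satisfying z = −1/m̲ + c∫ t/(1+tm̲) dH(t). Then for z₁ ≠ z₂ in the upper half plane, the quantity a(z₁,z₂) := c m̲(z₁) m̲(z₂) ∫ t²/((1+tm̲(z₁))(1+tm̲(z₂))) dH(t) satisfies a(z₁,z₂) = 1 + m̲(z₁)m̲(z₂)(z₁ − z₂)/(m̲(z₂) − m̲(z₁)). -/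
open MeasureTheory

/-- If a measure is a.e. supported in `Icc 0 R`, any continuous function is integrable. -/
lemma integrable_of_cont_aux (H : Measure ℝ) [IsFiniteMeasure H] (R : ℝ)
    (hHsupp : ∀ᵐ t ∂H, t ∈ Set.Icc 0 R) (f : ℝ → ℂ) (hf : Continuous f) :
    Integrable f H := by
  obtain ⟨C, hC⟩ := isCompact_Icc.exists_bound_of_continuousOn
    (s := Set.Icc 0 R) hf.continuousOn
  exact ⟨hf.aestronglyMeasurable,
    HasFiniteIntegral.of_bounded (C := C) (hHsupp.mono fun t ht => hC t ht)⟩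

/-- `mb z` is not real. -/
lemma im_ne_zero_aux (c : ℝ) (H : Measure ℝ) (m z : ℂ)
    (hmp : z = -m⁻¹ + c * ∫ t, (t : ℂ) / (1 + (t : ℂ) * m) ∂H)
    (hz : 0 < z.im) : m.im ≠ 0 := by
  intro h
  have hm : m = ((m.re : ℝ) : ℂ) := Complex.ext rfl (by simp [h])
  rw [hm] at hmp
  have hint : (∫ t, (t : ℂ) / (1 + (t : ℂ) * (m.re : ℂ)) ∂H)
      = ((∫ t, t / (1 + t * m.re) ∂H : ℝ) : ℂ) := by
    have he : ∀ t : ℝ, (t : ℂ) / (1 + (t : ℂ) * (m.re : ℂ))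
        = ((t / (1 + t * m.re) : ℝ) : ℂ) := by
      intro t; push_cast; ring
    simp_rw [he]
    exact integral_ofReal
  rw [hint] at hmp
  have : z.im = 0 := by
    rw [hmp]
    simp
  linarith

/-- With `m̲` the companion Stieltjes transform of the MP law
(satisfying `z = −1/m̲ + c∫ t/(1+tm̲)dH`), for `z₁ ≠ z₂` in `ℂ⁺`,
`a(z₁,z₂) = c m̲(z₁)m̲(z₂)∫ t²/((1+tm̲(z₁))(1+tm̲(z₂)))dH(t)
  = 1 + m̲(z₁)m̲(z₂)(z₁−z₂)/(m̲(z₂)−m̲(z₁))`. -/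
theorem stmt10 (c : ℝ) (hc : 0 < c) (H : Measure ℝ) [IsProbabilityMeasure H]
    (R : ℝ) (hHsupp : ∀ᵐ t ∂H, t ∈ Set.Icc 0 R)
    (mb : ℂ → ℂ)
    (hmp : ∀ z : ℂ, 0 < z.im →
      z = -(mb z)⁻¹ + c * ∫ t, (t : ℂ) / (1 + (t : ℂ) * mb z) ∂H)
    (z₁ z₂ : ℂ) (hz₁ : 0 < z₁.im) (hz₂ : 0 < z₂.im) (hzz : z₁ ≠ z₂)
    (hmm : mb z₁ ≠ mb z₂) :
    c * mb z₁ * mb z₂ *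
        ∫ t, (t : ℂ) ^ 2 / ((1 + (t : ℂ) * mb z₁) * (1 + (t : ℂ) * mb z₂)) ∂H
      = 1 + mb z₁ * mb z₂ * (z₁ - z₂) / (mb z₂ - mb z₁) := by
  set m₁ := mb z₁ with hm₁def
  set m₂ := mb z₂ with hm₂def
  have him₁ : m₁.im ≠ 0 := im_ne_zero_aux c H m₁ z₁ (hmp z₁ hz₁) hz₁
  have him₂ : m₂.im ≠ 0 := im_ne_zero_aux c H m₂ z₂ (hmp z₂ hz₂) hz₂
  have hne₁ : m₁ ≠ 0 := fun h => him₁ (by rw [h]; simp)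
  have hne₂ : m₂ ≠ 0 := fun h => him₂ (by rw [h]; simp)
  -- denominators never vanish
  have hden : ∀ (m : ℂ), m.im ≠ 0 → ∀ t : ℝ, (1 + (t : ℂ) * m) ≠ 0 := by
    intro m him t h
    have : (1 + (t : ℂ) * m).im = t * m.im := by simp
    rw [h] at this
    rcases mul_eq_zero.mp this.symm with ht | hm
    · rw [Complex.ofReal_eq_zero.mpr ht] at h
      simp at h
    · exact him hm
  have hd₁ := hden m₁ him₁
  have hd₂ := hden m₂ him₂
  -- continuity of the integrands
  have hcden : ∀ m : ℂ, Continuous fun t : ℝ => 1 + (t : ℂ) * m := fun m =>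
    continuous_const.add (Complex.continuous_ofReal.mul continuous_const)
  have hc₁ : Continuous fun t : ℝ => (t : ℂ) / (1 + (t : ℂ) * m₁) :=
    Continuous.div Complex.continuous_ofReal (hcden m₁) hd₁
  have hc₂ : Continuous fun t : ℝ => (t : ℂ) / (1 + (t : ℂ) * m₂) :=
    Continuous.div Complex.continuous_ofReal (hcden m₂) hd₂
  have hcI : Continuous fun t : ℝ =>
      (t : ℂ) ^ 2 / ((1 + (t : ℂ) * m₁) * (1 + (t : ℂ) * m₂)) :=
    Continuous.div (Complex.continuous_ofReal.pow 2) ((hcden m₁).mul (hcden m₂))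
      (fun t => mul_ne_zero (hd₁ t) (hd₂ t))
  have hi₁ := integrable_of_cont_aux H R hHsupp _ hc₁
  have hi₂ := integrable_of_cont_aux H R hHsupp _ hc₂
  have hiI := integrable_of_cont_aux H R hHsupp _ hcI
  set I := ∫ t, (t : ℂ) ^ 2 / ((1 + (t : ℂ) * m₁) * (1 + (t : ℂ) * m₂)) ∂H with hIdef
  have key : (∫ t, (t : ℂ) / (1 + (t : ℂ) * m₁) ∂H)
      - (∫ t, (t : ℂ) / (1 + (t : ℂ) * m₂) ∂H) = (m₂ - m₁) * I := by
    rw [← integral_sub hi₁ hi₂, hIdef, ← integral_const_mul]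
    congr 1
    funext t
    have h1 := hd₁ t
    have h2 := hd₂ t
    field_simp
    ring
  have h12 : z₁ - z₂ = m₂⁻¹ - m₁⁻¹ + c * ((m₂ - m₁) * I) := by
    rw [hmp z₁ hz₁, hmp z₂ hz₂, ← hm₁def, ← hm₂def, ← key]
    ring
  rw [h12]
  have hsub : m₂ - m₁ ≠ 0 := sub_ne_zero_of_ne (Ne.symm hmm)
  field_simp
  ring
end

section
/- Let B_n be a random p×p positive semidefinite matrix (the SSCM), η_r > limsup ||Σ||(1+√c)² and suppose P(||B_n^{(0)}|| > η_r^{(0)}) = o(n^{-s}) for the Gaussian SCM B_n^{(0)} and exponential concentration of ||Az_j||²/p around r₁ holds. Then using the inequality ||B_n|| ≤ max_{1≤j≤n} (p/||Az_j||²) · ||B_n^{(0)}||, one has P(||B_n|| > η_r) = o(n^{-s}) for every s > 0. -/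
/-!
On the event that every radius `‖Az_j‖²/p` is at least `r₁ - δ`, each weight `p/‖Az_j‖²` of the
SSCM is at most `1/(r₁ - δ)`, so `(r₁ - δ) B_n ≤ B_n⁽⁰⁾` in the Loewner order and hence
`(r₁ - δ) ‖B_n‖ ≤ ‖B_n⁽⁰⁾‖`. Thus `‖B_n‖ > η_r` forces either `‖B_n⁽⁰⁾‖ > η_r⁽⁰⁾` or a radius
deviating from `r₁` by more than `δ`, and both events have probability `o(n^{-s})`.
-/

open MeasureTheory ProbabilityTheory Matrix Filter
open scoped Topology

namespace ContinuousLinearMap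

variable {𝕜 E : Type*} [RCLike 𝕜] [NormedAddCommGroup E] [InnerProductSpace 𝕜 E]

theorem norm_le_norm_of_isPositive_of_isPositive_sub {S T : E →L[𝕜] E} (hS : S.IsPositive)
    (hTS : (T - S).IsPositive) : ‖S‖ ≤ ‖T‖ := by
  rw [S.norm_eq_iSup_rayleighQuotient hS.isSymmetric]
  refine ciSup_le fun x => ?_
  have hST : S.reApplyInnerSelf x ≤ T.reApplyInnerSelf x := by
    have := hTS.re_inner_nonneg_left x
    rwa [_root_.sub_apply, inner_sub_left, map_sub, sub_nonneg] at this
  calc |S.rayleighQuotient x| = S.rayleighQuotient x :=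
        abs_of_nonneg (div_nonneg (hS.re_inner_nonneg_left x) (sq_nonneg _))
    _ ≤ T.rayleighQuotient x := div_le_div_of_nonneg_right hST (sq_nonneg _)
    _ ≤ ‖T‖ := (le_abs_self _).trans (T.rayleighQuotient_le_norm x)

end ContinuousLinearMap

namespace Matrix

open scoped ComplexOrder

theorem norm_toEuclideanCLM_le_of_posSemidef_sub {𝕜 ι : Type*} [RCLike 𝕜] [Fintype ι]
    [DecidableEq ι] {M N : Matrix ι ι 𝕜} (hM : M.PosSemidef) (hNM : (N - M).PosSemidef) :
    ‖toEuclideanCLM (𝕜 := 𝕜) M‖ ≤ ‖toEuclideanCLM (𝕜 := 𝕜) N‖ := by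
  refine ContinuousLinearMap.norm_le_norm_of_isPositive_of_isPositive_sub
    (isPositive_toEuclideanLin_iff.mpr hM) ?_
  rw [← map_sub]
  exact isPositive_toEuclideanLin_iff.mpr hNM

theorem posSemidef_sum_smul_vecMulVec {ι κ : Type*} [Fintype ι] [Fintype κ]
    (v : κ → ι → ℝ) {w : κ → ℝ} (hw : ∀ j, 0 ≤ w j) :
    (∑ j, w j • vecMulVec (v j) (v j)).PosSemidef :=
  posSemidef_sum _ fun j _ => by
    simpa using (posSemidef_vecMulVec_self_star (v j)).smul (hw j)

theorem norm_toEuclideanCLM_sum_smul_vecMulVec_mono {ι κ : Type*} [Fintype ι] [DecidableEq ι]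
    [Fintype κ] (v : κ → ι → ℝ) {a b : κ → ℝ} (ha : ∀ j, 0 ≤ a j) (hab : ∀ j, a j ≤ b j) :
    ‖toEuclideanCLM (𝕜 := ℝ) (∑ j, a j • vecMulVec (v j) (v j))‖ ≤
      ‖toEuclideanCLM (𝕜 := ℝ) (∑ j, b j • vecMulVec (v j) (v j))‖ := by
  refine norm_toEuclideanCLM_le_of_posSemidef_sub (posSemidef_sum_smul_vecMulVec v ha) ?_
  rw [← Finset.sum_sub_distrib]
  simp_rw [← sub_smul]
  exact posSemidef_sum_smul_vecMulVec v fun j => sub_nonneg.mpr (hab j)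

end Matrix

theorem mul_div_le_one_of_le_div {t s q : ℝ} (hs : 0 ≤ s) (hq : 0 ≤ q) (h : t ≤ s / q) :
    t * (q / s) ≤ 1 := by
  rcases hs.eq_or_lt with rfl | hs
  · simp
  rcases hq.eq_or_lt with rfl | hq
  · simp
  calc t * (q / s) ≤ s / q * (q / s) := mul_le_mul_of_nonneg_right h (by positivity)
    _ = 1 := by field_simp

noncomputable def sampleCovariance {m n : ℕ} (v : Fin n → Fin m → ℝ) :
    Matrix (Fin m) (Fin m) ℝ :=
  (n : ℝ)⁻¹ • ∑ j, vecMulVec (v j) (v j)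

/-- A zero sample gets weight `m / 0 = 0`. -/
noncomputable def spatialSignCovariance {m n : ℕ} (v : Fin n → Fin m → ℝ) :
    Matrix (Fin m) (Fin m) ℝ :=
  (n : ℝ)⁻¹ • ∑ j, ((m : ℝ) / ∑ i, v j i ^ 2) • vecMulVec (v j) (v j)

theorem mul_norm_spatialSignCovariance_le {m n : ℕ} (v : Fin n → Fin m → ℝ) {t : ℝ}
    (ht : 0 ≤ t) (hv : ∀ j, t ≤ (∑ i, v j i ^ 2) / m) :
    t * ‖toEuclideanCLM (𝕜 := ℝ) (spatialSignCovariance v)‖ ≤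
      ‖toEuclideanCLM (𝕜 := ℝ) (sampleCovariance v)‖ := by
  have hsq : ∀ j, 0 ≤ ∑ i, v j i ^ 2 := fun j => by positivity
  calc _ = ‖toEuclideanCLM (𝕜 := ℝ) (∑ j,
        (t * ((n : ℝ)⁻¹ * ((m : ℝ) / ∑ i, v j i ^ 2))) • vecMulVec (v j) (v j))‖ := by
        simp only [spatialSignCovariance, ← smul_smul, ← Finset.smul_sum, map_smul, norm_smul,
          Real.norm_of_nonneg ht]
    _ ≤ ‖toEuclideanCLM (𝕜 := ℝ) (∑ j, (n : ℝ)⁻¹ • vecMulVec (v j) (v j))‖ := by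
        refine norm_toEuclideanCLM_sum_smul_vecMulVec_mono v (fun j => by positivity) fun j => ?_
        rw [mul_left_comm]
        exact mul_le_of_le_one_right (by positivity)
          (mul_div_le_one_of_le_div (hsq j) (Nat.cast_nonneg m) (hv j))
    _ = _ := by rw [sampleCovariance, Finset.smul_sum]

theorem lt_norm_sampleCovariance_of_lt_norm_spatialSignCovariance {m n : ℕ}
    (v : Fin n → Fin m → ℝ) {r δ η₀ η : ℝ} (hη : 0 < η) (hgap : η₀ < (r - δ) * η)
    (hv : ∀ j, |(∑ i, v j i ^ 2) / m - r| ≤ δ)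
    (hB : η < ‖toEuclideanCLM (𝕜 := ℝ) (spatialSignCovariance v)‖) :
    η₀ < ‖toEuclideanCLM (𝕜 := ℝ) (sampleCovariance v)‖ := by
  rcases le_or_gt (r - δ) 0 with ht | ht
  · exact hgap.trans_le ((mul_nonpos_of_nonpos_of_nonneg ht hη.le).trans (norm_nonneg _))
  · calc η₀ < (r - δ) * η := hgap
      _ < (r - δ) * _ := mul_lt_mul_of_pos_left hB ht
      _ ≤ _ := mul_norm_spatialSignCovariance_le v ht.le fun j => by
        linarith [(abs_le.mp (hv j)).1]

theorem tendsto_mul_measure_of_subset_union {Ω : ℕ → Type*} [∀ n, MeasurableSpace (Ω n)]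
    {P : ∀ n, Measure (Ω n)} [∀ n, IsFiniteMeasure (P n)] {f : ℕ → ℝ} (hf : ∀ n, 0 ≤ f n)
    {X E F : ∀ n, Set (Ω n)} (hXEF : ∀ᶠ n in atTop, X n ⊆ E n ∪ F n)
    (hE : Tendsto (fun n => f n * (P n (E n)).toReal) atTop (𝓝 0))
    (hF : Tendsto (fun n => f n * (P n (F n)).toReal) atTop (𝓝 0)) :
    Tendsto (fun n => f n * (P n (X n)).toReal) atTop (𝓝 0) := by
  refine squeeze_zero' (.of_forall fun n => mul_nonneg (hf n) ENNReal.toReal_nonneg) ?_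
    (by simpa only [add_zero] using hE.add hF)
  filter_upwards [hXEF] with n hn
  rw [← mul_add]
  exact mul_le_mul_of_nonneg_left
    ((measureReal_mono (μ := P n) hn).trans (measureReal_union_le _ _)) (hf n)

theorem stmt17_general (p : ℕ → ℕ)
    (Ω : ℕ → Type) (mΩ : ∀ n, MeasurableSpace (Ω n))
    (P : ∀ n, Measure (Ω n)) (hprob : ∀ n, IsProbabilityMeasure (P n))
    (A : (n : ℕ) → Matrix (Fin (p n)) (Fin (p n)) ℝ)
    (z : (n : ℕ) → Fin n → Ω n → EuclideanSpace ℝ (Fin (p n)))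
    (ηr η0 : ℝ) (hηr : 0 < ηr)
    (hgap : ∃ δ > (0 : ℝ), ∀ᶠ n in atTop,
      η0 < (Matrix.trace (A n * (A n)ᵀ) / p n - δ) * ηr)
    -- tail bound for the Gaussian sample covariance matrix
    (hB0 : ∀ s > (0 : ℝ), Tendsto (fun n : ℕ => (n : ℝ) ^ s *
      ((P n) {ω | η0 < ‖Matrix.toEuclideanCLM (𝕜 := ℝ) ((n : ℝ)⁻¹ • ∑ j : Fin n,
        vecMulVec ((A n).mulVec (z n j ω)) ((A n).mulVec (z n j ω)))‖}).toReal)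
      atTop (nhds 0))
    -- super-polynomial concentration of the radii ‖Az_j‖²/p around r₁ = tr T / p
    (hconc : ∀ ε > (0 : ℝ), ∀ s > (0 : ℝ), Tendsto (fun n : ℕ => (n : ℝ) ^ s *
      ((P n) {ω | ∃ j : Fin n, ε < |(∑ i, ((A n).mulVec (z n j ω)) i ^ 2) / p n
        - Matrix.trace (A n * (A n)ᵀ) / p n|}).toReal) atTop (nhds 0)) :
    ∀ s > (0 : ℝ), Tendsto (fun n : ℕ => (n : ℝ) ^ s *
      ((P n) {ω | ηr < ‖Matrix.toEuclideanCLM (𝕜 := ℝ) ((n : ℝ)⁻¹ • ∑ j : Fin n,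
        ((p n : ℝ) / ∑ i, ((A n).mulVec (z n j ω)) i ^ 2) •
          vecMulVec ((A n).mulVec (z n j ω)) ((A n).mulVec (z n j ω)))‖}).toReal)
      atTop (nhds 0) := by
  intro s hs
  obtain ⟨δ, hδ, hgap⟩ := hgap
  refine tendsto_mul_measure_of_subset_union (fun n => Real.rpow_nonneg n.cast_nonneg s)
    (hgap.mono fun n hn ω hω => ?_) (hB0 s hs) (hconc δ hδ s hs)
  by_cases hrad : ∃ j : Fin n, δ < |(∑ i, ((A n).mulVec (z n j ω)) i ^ 2) / p n
      - Matrix.trace (A n * (A n)ᵀ) / p n|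
  · exact Or.inr hrad
  · simp only [not_exists, not_lt] at hrad
    exact Or.inl (lt_norm_sampleCovariance_of_lt_norm_spatialSignCovariance _ hηr hn hrad hω)

/-- if the Gaussian SCM `B_n⁽⁰⁾ = (1/n)Σ (Az_j)(Az_j)ᵀ` has spectral norm
exceeding `η_r⁽⁰⁾` with probability `o(n^{-s})`, the quadratic forms `‖Az_j‖²/p`
concentrate super-polynomially around `r₁ = tr T/p`, and `η_r⁽⁰⁾ < (r₁ − δ)·η_r`
eventually, then the SSCM `B_n = (1/n)Σ p (Az_j)(Az_j)ᵀ/‖Az_j‖²` satisfies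
`P(‖B_n‖ > η_r) = o(n^{−s})` for every `s > 0`. -/
theorem stmt17 (c : ℝ) (hc : 0 < c) (p : ℕ → ℕ)
    (hpn : Tendsto (fun n : ℕ => (p n : ℝ) / n) atTop (nhds c))
    (Ω : ℕ → Type) (mΩ : ∀ n, MeasurableSpace (Ω n))
    (P : ∀ n, Measure (Ω n)) (hprob : ∀ n, IsProbabilityMeasure (P n))
    (A : (n : ℕ) → Matrix (Fin (p n)) (Fin (p n)) ℝ)
    (z : (n : ℕ) → Fin n → Ω n → EuclideanSpace ℝ (Fin (p n)))
    (hmeas : ∀ n j, Measurable (z n j))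
    (hnz : ∀ n j, ∀ᵐ ω ∂(P n), (A n).mulVec (z n j ω) ≠ 0)
    (ηr η0 : ℝ) (hη0 : 0 < η0) (hηr : 0 < ηr)
    (hgap : ∃ δ > (0 : ℝ), ∀ᶠ n in atTop,
      η0 < (Matrix.trace (A n * (A n)ᵀ) / p n - δ) * ηr)
    -- tail bound for the Gaussian sample covariance matrix
    (hB0 : ∀ s > (0 : ℝ), Tendsto (fun n : ℕ => (n : ℝ) ^ s *
      ((P n) {ω | η0 < ‖Matrix.toEuclideanCLM (𝕜 := ℝ) ((n : ℝ)⁻¹ • ∑ j : Fin n,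
        vecMulVec ((A n).mulVec (z n j ω)) ((A n).mulVec (z n j ω)))‖}).toReal)
      atTop (nhds 0))
    -- super-polynomial concentration of the radii ‖Az_j‖²/p around r₁ = tr T / p
    (hconc : ∀ ε > (0 : ℝ), ∀ s > (0 : ℝ), Tendsto (fun n : ℕ => (n : ℝ) ^ s *
      ((P n) {ω | ∃ j : Fin n, ε < |(∑ i, ((A n).mulVec (z n j ω)) i ^ 2) / p n
        - Matrix.trace (A n * (A n)ᵀ) / p n|}).toReal) atTop (nhds 0)) :
    ∀ s > (0 : ℝ), Tendsto (fun n : ℕ => (n : ℝ) ^ s *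
      ((P n) {ω | ηr < ‖Matrix.toEuclideanCLM (𝕜 := ℝ) ((n : ℝ)⁻¹ • ∑ j : Fin n,
        ((p n : ℝ) / ∑ i, ((A n).mulVec (z n j ω)) i ^ 2) •
          vecMulVec ((A n).mulVec (z n j ω)) ((A n).mulVec (z n j ω)))‖}).toReal)
      atTop (nhds 0) :=
  stmt17_general p Ω mΩ P hprob A z ηr η0 hηr hgap hB0 hconc
end
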